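/- arXiv:2412.08572 — 2 statements merged into one kernel-verified Lean document; each statement's English description precedes it below -/
import Mathlib

section
/- Let v be a goods-allocation instance with m agents and n goods and let A be an allocation. Then there exist transfers q : Fin m → ℝ such that the mechanism (A, q) is proportional (i.e., v_i(A_i) − q_i ≥ (1/m)·Σ_{k ∈ Fin m} (v_i(A_k) − q_k) for every agent i) if and only if A is mean-efficient, i.e., Σ_{i ∈ Fin m} v_i(A_i) ≥ (1/m)·Σ_{i ∈ Fin m} v_i([n]). -/
/-!
Summing the proportionality constraints over all agents makes the transfers cancel and leaves
exactly mean-efficiency. Conversely, the transfers `q i = v_i(A_i) - v_i([n]) / m` give every agent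
the net utility `v_i([n]) / m`, and agent `i`'s constraint then reads `0 ≤ ∑ q`, which is
mean-efficiency again.
-/

open Finset

noncomputable section

/-- The cost to machine `i` of the bundle of jobs assigned to machine `k` under allocation `A`. -/
def bundleCost {m n : ℕ} (c : Fin m → Fin n → ℝ) (A : Fin n → Fin m) (i k : Fin m) : ℝ :=
  ∑ j ∈ Finset.univ.filter (fun j => A j = k), c i j

/-- The total cost to machine `i` of all jobs, `c_i([n])`. -/
def rowSum {m n : ℕ} (c : Fin m → Fin n → ℝ) (i : Fin m) : ℝ :=
  ∑ j, c i j

theorem sum_bundleCost {m n : ℕ} (c : Fin m → Fin n → ℝ) (A : Fin n → Fin m) (i : Fin m) :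
    ∑ k, bundleCost c A i k = rowSum c i :=
  sum_fiberwise_of_maps_to (fun j _ => mem_univ (A j)) (c i)

theorem exists_proportional_transfers_iff {ι : Type*} [Fintype ι] [Nonempty ι]
    (u : ι → ι → ℝ) :
    (∃ q : ι → ℝ, ∀ i, (1 / (Fintype.card ι : ℝ)) * ∑ k, (u i k - q k) ≤ u i i - q i) ↔
      (1 / (Fintype.card ι : ℝ)) * ∑ i, ∑ k, u i k ≤ ∑ i, u i i := by
  have hc : 0 < 1 / (Fintype.card ι : ℝ) := by positivity
  constructor
  · rintro ⟨q, hq⟩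
    have hsum : ∑ i, (1 / (Fintype.card ι : ℝ)) * ∑ k, (u i k - q k) =
        (1 / (Fintype.card ι : ℝ)) * ∑ i, ∑ k, u i k - ∑ k, q k := by
      simp only [← mul_sum, sum_sub_distrib, sum_const, card_univ, nsmul_eq_mul]
      field_simp
    linarith [hsum ▸ sum_le_sum fun i _ => hq i, sum_sub_distrib (s := univ) (fun i => u i i) q]
  · intro h
    refine ⟨fun i => u i i - 1 / (Fintype.card ι : ℝ) * ∑ k, u i k, fun i => ?_⟩
    have htransfers : 0 ≤ ∑ k, (u k k - 1 / (Fintype.card ι : ℝ) * ∑ l, u k l) := by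
      rw [sum_sub_distrib, ← mul_sum]
      linarith
    rw [sum_sub_distrib, mul_sub]
    linarith [mul_nonneg hc.le htransfers]

theorem stmt_11_general {m n : ℕ} (hm : 2 ≤ m)
    (v : Fin m → Fin n → ℝ) (A : Fin n → Fin m) :
    (∃ q : Fin m → ℝ, ∀ i : Fin m,
        (1 / (m : ℝ)) * ∑ k : Fin m, (bundleCost v A i k - q k) ≤ bundleCost v A i i - q i)
    ↔ (1 / (m : ℝ)) * ∑ i : Fin m, rowSum v i ≤ ∑ i : Fin m, bundleCost v A i i := by
  have : NeZero m := ⟨by omega⟩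
  simpa only [Fintype.card_fin, sum_bundleCost] using
    exists_proportional_transfers_iff (bundleCost v A)

/-- Goods version: an allocation can be made proportional with transfers iff it is
mean-efficient. -/
theorem stmt_11 {m n : ℕ} (hm : 2 ≤ m) (hn : 2 ≤ n)
    (v : Fin m → Fin n → ℝ) (hv : ∀ i j, 0 ≤ v i j) (A : Fin n → Fin m) :
    (∃ q : Fin m → ℝ, ∀ i : Fin m,
        (1 / (m : ℝ)) * ∑ k : Fin m, (bundleCost v A i k - q k) ≤ bundleCost v A i i - q i)
    ↔ (1 / (m : ℝ)) * ∑ i : Fin m, rowSum v i ≤ ∑ i : Fin m, bundleCost v A i i :=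
  stmt_11_general hm v A
end
end

section
/- Let v be a normalized goods-allocation instance with m agents and n goods, i.e., there is a constant C with v_i([n]) = C for every agent i. Then there exist an allocation A and transfers q : Fin m → ℝ such that the mechanism (A, q) is proportional and A attains the optimal egalitarian welfare, i.e., min_{i ∈ Fin m} v_i(A_i) = OPT(v). -/
open Finset

noncomputable section

/-- The egalitarian welfare of allocation `A`: the minimum value of any agent. -/
def egalWelfare {m n : ℕ} (hm : 0 < m) (v : Fin m → Fin n → ℝ) (A : Fin n → Fin m) : ℝ :=
  (Finset.univ : Finset (Fin m)).inf' ⟨⟨0, hm⟩, Finset.mem_univ _⟩ fun i => bundleCost v A i i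

/-- The optimal (maximum) egalitarian welfare over all allocations. -/
def OPTgoods {m n : ℕ} (hm : 0 < m) (v : Fin m → Fin n → ℝ) : ℝ :=
  (Finset.univ : Finset (Fin n → Fin m)).sup' ⟨fun _ => ⟨0, hm⟩, Finset.mem_univ _⟩
    fun X => egalWelfare hm v X

/-!
Among the allocations of optimal egalitarian welfare, take one, `A`, of maximal utilitarian
welfare `S = ∑ᵢ vᵢ(Aᵢ)`, and charge every agent its own value, `qᵢ = vᵢ(Aᵢ)`. Agent `i` is then
proportional iff `vᵢ([n]) ≤ S`, which for a normalized instance is one inequality `C ≤ S`.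
If it failed, every agent `i` would value some bundle `A_{g i}` more than its owner does. Following
`g` around one of its cycles and handing every agent on it the bundle it covets keeps the
egalitarian welfare optimal and strictly raises `S`, a contradiction.
-/

namespace Function

variable {α : Type*}

theorem nonempty_periodicPts [Finite α] [Nonempty α] (f : α → α) : (periodicPts f).Nonempty := by
  obtain ⟨x⟩ := ‹Nonempty α›
  obtain ⟨a, b, heq, hne⟩ : ∃ a b, f^[a] x = f^[b] x ∧ a ≠ b := by
    simpa [Injective] using not_injective_infinite_finite (f^[·] x)
  rcases hne.lt_or_gt with hlt | hlt
  · refine ⟨f^[a] x, mk_mem_periodicPts (n := b - a) (by lia) ?_⟩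
    rw [IsPeriodicPt, IsFixedPt, ← iterate_add_apply, Nat.sub_add_cancel hlt.le, heq]
  · refine ⟨f^[b] x, mk_mem_periodicPts (n := a - b) (by lia) ?_⟩
    rw [IsPeriodicPt, IsFixedPt, ← iterate_add_apply, Nat.sub_add_cancel hlt.le, heq]

/-- `f` restricted to its periodic points, extended by the identity, is a permutation. -/
theorem exists_perm_eq_self_or_eq_apply [Finite α] [Nonempty α] (f : α → α) :
    ∃ σ : Equiv.Perm α, (∀ x, σ x = x ∨ σ x = f x) ∧ ∃ x, σ x = f x := by
  classical
  obtain ⟨p, hp⟩ := nonempty_periodicPts f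
  have hinj : Injective ((periodicPts f).piecewise f id) :=
    (Set.injective_piecewise_iff _).2 ⟨(bijOn_periodicPts f).injOn, injective_id.injOn,
      fun x hx y hy hxy => hy (hxy ▸ (bijOn_periodicPts f).mapsTo hx : id y ∈ _)⟩
  let σ := Equiv.ofBijective _ (Finite.injective_iff_bijective.1 hinj)
  refine ⟨σ, fun x => ?_, p, Set.piecewise_eq_of_mem _ _ _ hp⟩
  by_cases hx : x ∈ periodicPts f
  · exact Or.inr (Set.piecewise_eq_of_mem _ _ _ hx)
  · exact Or.inl (Set.piecewise_eq_of_notMem _ _ _ hx)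

end Function

section Allocation

variable {m n : ℕ}

def utilWelfare (v : Fin m → Fin n → ℝ) (A : Fin n → Fin m) : ℝ :=
  ∑ i, bundleCost v A i i

def IsProportional (v : Fin m → Fin n → ℝ) (A : Fin n → Fin m) (q : Fin m → ℝ) : Prop :=
  ∀ i, (1 / (m : ℝ)) * ∑ k, (bundleCost v A i k - q k) ≤ bundleCost v A i i - q i

theorem sum_bundleCost_eq_rowSum (c : Fin m → Fin n → ℝ) (A : Fin n → Fin m) (i : Fin m) :
    ∑ k, bundleCost c A i k = rowSum c i :=
  sum_fiberwise _ _ _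

theorem bundleCost_perm_symm_comp (c : Fin m → Fin n → ℝ) (A : Fin n → Fin m)
    (σ : Equiv.Perm (Fin m)) (i k : Fin m) :
    bundleCost c (σ.symm ∘ A) i k = bundleCost c A i (σ k) := by
  simp only [bundleCost, Function.comp_apply, Equiv.symm_apply_eq]

theorem egalWelfare_le_OPTgoods (hm : 0 < m) (v : Fin m → Fin n → ℝ) (A : Fin n → Fin m) :
    egalWelfare hm v A ≤ OPTgoods hm v :=
  le_sup' (egalWelfare hm v) (mem_univ A)

theorem exists_egalWelfare_eq_OPTgoods_forall_utilWelfare_le (hm : 0 < m)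
    (v : Fin m → Fin n → ℝ) :
    ∃ A, egalWelfare hm v A = OPTgoods hm v ∧
      ∀ A', egalWelfare hm v A ≤ egalWelfare hm v A' → utilWelfare v A' ≤ utilWelfare v A := by
  classical
  obtain ⟨A₀, -, hA₀⟩ := exists_mem_eq_sup' ⟨fun _ => ⟨0, hm⟩, mem_univ _⟩ (egalWelfare hm v)
  obtain ⟨A, hA, hmax⟩ := exists_max_image (univ.filter fun A => egalWelfare hm v A = OPTgoods hm v)
    (utilWelfare v) ⟨A₀, mem_filter.2 ⟨mem_univ _, hA₀.symm⟩⟩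
  have hAopt := (mem_filter.1 hA).2
  exact ⟨A, hAopt, fun A' hA' => hmax A' (mem_filter.2
    ⟨mem_univ _, (egalWelfare_le_OPTgoods hm v A').antisymm (hAopt ▸ hA')⟩)⟩

theorem exists_rowSum_le_utilWelfare (hm : 0 < m) {v : Fin m → Fin n → ℝ} {A : Fin n → Fin m}
    (hA : ∀ A', egalWelfare hm v A ≤ egalWelfare hm v A' → utilWelfare v A' ≤ utilWelfare v A) :
    ∃ i, rowSum v i ≤ utilWelfare v A := by
  by_contra! h
  have hcovet : ∀ i, ∃ k, bundleCost v A k k < bundleCost v A i k := fun i => by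
    obtain ⟨k, -, hk⟩ := exists_lt_of_sum_lt (s := univ)
      (sum_bundleCost_eq_rowSum v A i ▸ h i : utilWelfare v A < _)
    exact ⟨k, hk⟩
  choose g hg using hcovet
  have : Nonempty (Fin m) := ⟨⟨0, hm⟩⟩
  obtain ⟨σ, hσ, x₀, hx₀⟩ := Function.exists_perm_eq_self_or_eq_apply g
  have hle : ∀ x, bundleCost v A (σ x) (σ x) ≤ bundleCost v A x (σ x) := fun x => by
    rcases hσ x with h | h <;> rw [h]
    exact (hg x).le
  have hegal : egalWelfare hm v A ≤ egalWelfare hm v (σ.symm ∘ A) :=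
    le_inf' _ _ fun x _ => by
      rw [bundleCost_perm_symm_comp]
      exact (inf'_le _ (mem_univ (σ x))).trans (hle x)
  have hutil : utilWelfare v A < utilWelfare v (σ.symm ∘ A) :=
    calc utilWelfare v A = ∑ x, bundleCost v A (σ x) (σ x) := (Equiv.sum_comp σ _).symm
      _ < ∑ x, bundleCost v A x (σ x) :=
        sum_lt_sum (fun x _ => hle x) ⟨x₀, mem_univ _, hx₀ ▸ hg x₀⟩
      _ = utilWelfare v (σ.symm ∘ A) := by simp only [utilWelfare, bundleCost_perm_symm_comp]
  exact (hA _ hegal).not_gt hutil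

theorem isProportional_self_transfers {v : Fin m → Fin n → ℝ} {A : Fin n → Fin m}
    (h : ∀ i, rowSum v i ≤ utilWelfare v A) :
    IsProportional v A fun k => bundleCost v A k k := by
  intro i
  rw [sum_sub_distrib, sum_bundleCost_eq_rowSum, sub_self]
  exact mul_nonpos_of_nonneg_of_nonpos (by positivity) (sub_nonpos.2 (h i))

end Allocation

/-- For normalized goods instances there is a proportional mechanism attaining the optimal
egalitarian welfare. -/
theorem stmt_13 {m n : ℕ} (hm : 2 ≤ m)
    (v : Fin m → Fin n → ℝ)
    (C : ℝ) (hnorm : ∀ i : Fin m, rowSum v i = C) :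
    ∃ (A : Fin n → Fin m) (q : Fin m → ℝ),
      (∀ i : Fin m,
        (1 / (m : ℝ)) * ∑ k : Fin m, (bundleCost v A i k - q k) ≤ bundleCost v A i i - q i) ∧
      egalWelfare (by omega) v A = OPTgoods (by omega) v := by
  have hm0 : 0 < m := by omega
  obtain ⟨A, hopt, hmax⟩ := exists_egalWelfare_eq_OPTgoods_forall_utilWelfare_le hm0 v
  obtain ⟨i₀, hi₀⟩ := exists_rowSum_le_utilWelfare hm0 hmax
  have hrow : ∀ i, rowSum v i ≤ utilWelfare v A := fun i => by rwa [hnorm i, ← hnorm i₀]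
  exact ⟨A, _, isProportional_self_transfers hrow, hopt⟩

end
end
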